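/- Let A₁, A₂ be annuli in ℝ³ of thickness 4 and inner radius t with 2^{j−1} ≤ t ≤ 2^{j+1}, whose centers x₁, x₂ satisfy 2^l ≤ |x₁ − x₂| ≤ 2^j/10. Then A₁ ∩ A₂ is contained in a union of two slabs of the form {z ∈ ℝ³ : |⟨z − y, e⟩| ≤ 2^{j−l+4}}, where e = (x₂ − x₁)/|x₂ − x₁| and y ranges over the (at most two) heights of the intersection circles; in particular A₁ ∩ A₂ is contained in the union of O(2^{j−l}) tube neighborhoods of width O(1) around circles lying in planes normal to the line through x₁, x₂. -/
import Mathlib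


open Metric
open scoped RealInnerProductSpace

/-- The intersection of two annuli in ℝ³ of thickness 4 and inner radius
`t ∈ [2^{j-1}, 2^{j+1}]`, whose centers are at distance in `[2^l, 2^j/10]`, is contained in
a union of two slabs of half-width `2^{j-l+4}` normal to the line through the centers. -/
theorem stmt_18 (j l : ℤ) (t : ℝ) (x₁ x₂ : EuclideanSpace ℝ (Fin 3))
    (ht1 : (2 : ℝ) ^ (j - 1) ≤ t) (ht2 : t ≤ (2 : ℝ) ^ (j + 1))
    (hd1 : (2 : ℝ) ^ l ≤ dist x₁ x₂) (hd2 : dist x₁ x₂ ≤ (2 : ℝ) ^ j / 10) :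
    ∃ c₁ c₂ : ℝ,
      ({y | t ≤ dist y x₁ ∧ dist y x₁ ≤ t + 4} ∩
          {y | t ≤ dist y x₂ ∧ dist y x₂ ≤ t + 4}) ⊆
        {z : EuclideanSpace ℝ (Fin 3) |
            |⟪z - x₁, (dist x₁ x₂)⁻¹ • (x₂ - x₁)⟫ - c₁| ≤ (2 : ℝ) ^ (j - l + 4)} ∪
        {z : EuclideanSpace ℝ (Fin 3) |
            |⟪z - x₁, (dist x₁ x₂)⁻¹ • (x₂ - x₁)⟫ - c₂| ≤ (2 : ℝ) ^ (j - l + 4)} := by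
  have hd0 : (0 : ℝ) < dist x₁ x₂ := lt_of_lt_of_le (by positivity) hd1
  -- l ≤ j - 4
  have hlj : l ≤ j - 4 := by
    have h1 : (2 : ℝ) ^ l < (2 : ℝ) ^ (j - 3) := by
      have h2 : (2 : ℝ) ^ (j - 3) = (2 : ℝ) ^ j / 8 := by
        rw [zpow_sub₀ (two_ne_zero)]; norm_num
      have : (2 : ℝ) ^ j / 10 < (2 : ℝ) ^ j / 8 := by
        have : (0 : ℝ) < (2 : ℝ) ^ j := by positivity
        linarith
      linarith
    have := (zpow_lt_zpow_iff_right₀ (one_lt_two (α := ℝ))).mp h1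
    omega
  refine ⟨dist x₁ x₂ / 2, dist x₁ x₂ / 2, ?_⟩
  rintro z ⟨⟨h1a, h1b⟩, h2a, h2b⟩
  left
  simp only [Set.mem_setOf_eq]
  have hnorm : ‖x₂ - x₁‖ = dist x₁ x₂ := by rw [dist_comm, dist_eq_norm]
  have e1 : dist z x₁ = ‖z - x₁‖ := dist_eq_norm _ _
  have e2 : dist z x₂ = ‖z - x₂‖ := dist_eq_norm _ _
  set d := dist x₁ x₂ with hdd
  set r₁ := dist z x₁ with hr₁
  set r₂ := dist z x₂ with hr₂
  have key : ⟪z - x₁, x₂ - x₁⟫ = (r₁ ^ 2 + d ^ 2 - r₂ ^ 2) / 2 := by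
    have h := norm_sub_sq_real (z - x₁) (x₂ - x₁)
    have h2 : z - x₁ - (x₂ - x₁) = z - x₂ := by abel
    rw [h2, hnorm, ← e1, ← e2] at h
    linarith
  have hinner : ⟪z - x₁, d⁻¹ • (x₂ - x₁)⟫ = d⁻¹ * ((r₁ ^ 2 + d ^ 2 - r₂ ^ 2) / 2) := by
    rw [real_inner_smul_right, key]
  rw [hinner]
  have expr_eq : d⁻¹ * ((r₁ ^ 2 + d ^ 2 - r₂ ^ 2) / 2) - d / 2 = (r₁ ^ 2 - r₂ ^ 2) / (2 * d) := by
    field_simp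
    ring
  rw [expr_eq, abs_div, abs_of_pos (by linarith : (0 : ℝ) < 2 * d),
    div_le_iff₀ (by linarith : (0 : ℝ) < 2 * d)]
  have habs : |r₁ ^ 2 - r₂ ^ 2| = |r₁ - r₂| * (r₁ + r₂) := by
    have : r₁ ^ 2 - r₂ ^ 2 = (r₁ - r₂) * (r₁ + r₂) := by ring
    rw [this, abs_mul, abs_of_nonneg (by positivity : (0 : ℝ) ≤ r₁ + r₂)]
  rw [habs]
  have h4 : |r₁ - r₂| ≤ 4 := abs_le.mpr ⟨by linarith, by linarith⟩
  have hDd : |r₁ - r₂| ≤ d := by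
    have h := abs_dist_sub_le x₁ x₂ z
    rw [dist_comm x₁ z, dist_comm x₂ z] at h
    exact h
  have hsum : r₁ + r₂ ≤ 2 * t + 8 := by linarith
  have habsnn : (0 : ℝ) ≤ |r₁ - r₂| := abs_nonneg _
  have hrnn : (0 : ℝ) ≤ r₁ + r₂ := by positivity
  have hTpos : (0 : ℝ) < (2 : ℝ) ^ (j - l + 4) := by positivity
  rcases le_or_gt 1 j with hj | hj
  · -- j ≥ 1 : use |r₁ - r₂| ≤ 4
    have p1 : (2 : ℝ) ^ (j - l + 4) * (2 : ℝ) ^ l = (2 : ℝ) ^ (j + 4) := by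
      rw [← zpow_add₀ (two_ne_zero : (2 : ℝ) ≠ 0)]; ring_nf
    have p2 : (2 : ℝ) ^ (j + 4) = 8 * (2 : ℝ) ^ (j + 1) := by
      rw [show j + 4 = (j + 1) + 3 by ring, zpow_add₀ (two_ne_zero : (2 : ℝ) ≠ 0)]
      norm_num; ring
    have p3 : (32 : ℝ) ≤ (2 : ℝ) ^ (j + 4) := by
      calc (32 : ℝ) = (2 : ℝ) ^ (5 : ℤ) := by norm_num
        _ ≤ (2 : ℝ) ^ (j + 4) := zpow_le_zpow_right₀ one_le_two (by omega)
    have step1 : |r₁ - r₂| * (r₁ + r₂) ≤ 4 * (2 * t + 8) := by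
      calc |r₁ - r₂| * (r₁ + r₂) ≤ 4 * (r₁ + r₂) :=
            mul_le_mul_of_nonneg_right h4 hrnn
        _ ≤ 4 * (2 * t + 8) := by linarith
    have step2 : 4 * (2 * t + 8) ≤ 2 * (2 : ℝ) ^ (j + 4) := by linarith
    have step3 : 2 * (2 : ℝ) ^ (j + 4) ≤ (2 : ℝ) ^ (j - l + 4) * (2 * d) := by
      have h := mul_le_mul_of_nonneg_left hd1 hTpos.le
      rw [p1] at h
      calc 2 * (2 : ℝ) ^ (j + 4) ≤ 2 * ((2 : ℝ) ^ (j - l + 4) * d) := by linarith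
        _ = (2 : ℝ) ^ (j - l + 4) * (2 * d) := by ring
    linarith
  · -- j ≤ 0 : use |r₁ - r₂| ≤ d
    have q1 : (2 : ℝ) ^ (j + 1) ≤ 2 := by
      calc (2 : ℝ) ^ (j + 1) ≤ (2 : ℝ) ^ (1 : ℤ) := zpow_le_zpow_right₀ one_le_two (by omega)
        _ = 2 := by norm_num
    have q2 : (6 : ℝ) ≤ (2 : ℝ) ^ (j - l + 4) := by
      calc (6 : ℝ) ≤ (2 : ℝ) ^ (8 : ℤ) := by norm_num
        _ ≤ (2 : ℝ) ^ (j - l + 4) := zpow_le_zpow_right₀ one_le_two (by omega)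
    have step1 : |r₁ - r₂| * (r₁ + r₂) ≤ d * (2 * t + 8) :=
      mul_le_mul hDd hsum hrnn hd0.le
    have step2 : d * (2 * t + 8) ≤ d * 12 :=
      mul_le_mul_of_nonneg_left (by linarith) hd0.le
    have h6 : 6 * d ≤ (2 : ℝ) ^ (j - l + 4) * d := mul_le_mul_of_nonneg_right q2 hd0.le
    calc |r₁ - r₂| * (r₁ + r₂) ≤ d * 12 := le_trans step1 step2
      _ = 2 * (6 * d) := by ring
      _ ≤ 2 * ((2 : ℝ) ^ (j - l + 4) * d) := by linarith
      _ = (2 : ℝ) ^ (j - l + 4) * (2 * d) := by ring
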